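/- arXiv:2301.09449 — 4 statements merged into one kernel-verified Lean document; each statement's English description precedes it below -/
import Mathlib

section
/- Let G be a mixed graph on X ⊔ Y. The acyclic orientations H of G such that Y is an ideal of H are in bijection with pairs (G', G'') where G' is an acyclic orientation of G|_X and G'' is an acyclic orientation of G|_Y, provided Y is an ideal of G; the bijection sends H to (H|_X, H|_Y). -/
def IsOrientedCycle {α : Type} (A : Set (α × α)) (c : ℕ → α) (n : ℕ) : Prop :=
  2 ≤ n ∧ c 0 = c n ∧ ∀ i < n, (c i, c (i + 1)) ∈ A

def Acyclic {α : Type} (A : Set (α × α)) : Prop :=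
  ∀ (c : ℕ → α) (n : ℕ), ¬ IsOrientedCycle A c n

def IsIdeal {α : Type} (A : Set (α × α)) (I : Set α) : Prop :=
  ∀ x y : α, x ∈ I → (x, y) ∈ A → y ∈ I

def restrictArcs {α : Type} (A : Set (α × α)) (S : Set α) : Set (α × α) :=
  {p | p ∈ A ∧ p.1 ∈ S ∧ p.2 ∈ S}

def restrictEdges {α : Type} (E : Set (Sym2 α)) (S : Set α) : Set (Sym2 α) :=
  {e | e ∈ E ∧ ∀ x ∈ e, x ∈ S}

/-- `B` is (the arc set of) an orientation of the mixed graph with edges `E`, arcs `A`: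
it contains all arcs of `A`, exactly one orientation of each edge, and nothing else. -/
def IsOrientation {α : Type} (E : Set (Sym2 α)) (A B : Set (α × α)) : Prop :=
  A ⊆ B ∧
  (∀ x y : α, s(x, y) ∈ E →
    (((x, y) ∈ B ∧ (y, x) ∉ B) ∨ ((y, x) ∈ B ∧ (x, y) ∉ B))) ∧
  (∀ x y : α, (x, y) ∈ B → (x, y) ∈ A ∨ s(x, y) ∈ E)

lemma Acyclic.mono {α : Type} {A B : Set (α × α)} (hB : Acyclic B) (h : A ⊆ B) :
    Acyclic A := fun c n hc => hB c n ⟨hc.1, hc.2.1, fun i hi => h (hc.2.2 i hi)⟩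

lemma isOrientation_restrict {α : Type} {E : Set (Sym2 α)} {A B : Set (α × α)} (S : Set α)
    (h : IsOrientation E A B) :
    IsOrientation (restrictEdges E S) (restrictArcs A S) (restrictArcs B S) := by
  obtain ⟨h1, h2, h3⟩ := h
  refine ⟨fun p hp => ⟨h1 hp.1, hp.2⟩, ?_, ?_⟩
  · rintro x y ⟨hE, hS⟩
    have hx : x ∈ S := hS x (by simp)
    have hy : y ∈ S := hS y (by simp)
    rcases h2 x y hE with ⟨hb, hnb⟩ | ⟨hb, hnb⟩
    · exact Or.inl ⟨⟨hb, hx, hy⟩, fun hh => hnb hh.1⟩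
    · exact Or.inr ⟨⟨hb, hy, hx⟩, fun hh => hnb hh.1⟩
  · rintro x y ⟨hB, hx, hy⟩
    rcases h3 x y hB with h | h
    · exact Or.inl ⟨h, hx, hy⟩
    · refine Or.inr ⟨h, fun z hz => ?_⟩
      rcases Sym2.mem_iff.mp hz with rfl | rfl
      exacts [hx, hy]

lemma arcs_subset {α : Type} {E : Set (Sym2 α)} {A B : Set (α × α)} {S : Set α}
    (h : IsOrientation (restrictEdges E S) (restrictArcs A S) B) :
    ∀ u v : α, (u, v) ∈ B → u ∈ S ∧ v ∈ S := by
  intro u v hb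
  rcases h.2.2 u v hb with h' | h'
  · exact ⟨h'.2.1, h'.2.2⟩
  · exact ⟨h'.2 u (by simp), h'.2 v (by simp)⟩

def crossArcs {α : Type} (E : Set (Sym2 α)) (A : Set (α × α)) (X Y : Set α) :
    Set (α × α) :=
  {p | p.1 ∈ X ∧ p.2 ∈ Y ∧ (p ∈ A ∨ s(p.1, p.2) ∈ E)}

/-- For a mixed graph `G` on `X ⊔ Y` with `Y` an ideal of `G`, the map
`H ↦ (H|_X, H|_Y)` is a bijection from the acyclic orientations of `G` having `Y` as an
ideal to the pairs of an acyclic orientation of `G|_X` and one of `G|_Y`. -/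
theorem acyclic_orientations_ideal_bijection {α : Type} (E : Set (Sym2 α))
    (A : Set (α × α)) (X Y : Set α)
    (hdisj : Disjoint X Y) (hcover : X ∪ Y = Set.univ)
    (hedge : ∀ e ∈ E, ¬ e.IsDiag) (harc : ∀ a ∈ A, a.1 ≠ a.2)
    (hcompat : ∀ x y : α, s(x, y) ∈ E → (x, y) ∉ A)
    (hY : IsIdeal A Y) :
    ∃ f : {B : Set (α × α) // IsOrientation E A B ∧ Acyclic B ∧ IsIdeal B Y} →
        {p : Set (α × α) × Set (α × α) //
          (IsOrientation (restrictEdges E X) (restrictArcs A X) p.1 ∧ Acyclic p.1) ∧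
          (IsOrientation (restrictEdges E Y) (restrictArcs A Y) p.2 ∧ Acyclic p.2)},
      Function.Bijective f ∧
      ∀ B, (f B).val = (restrictArcs B.val X, restrictArcs B.val Y) := by
  classical
  have hXorY : ∀ a : α, a ∈ X ∨ a ∈ Y := fun a => by
    have h := Set.mem_univ a; rw [← hcover] at h; exact h
  have hnb : ∀ a : α, a ∈ X → a ∉ Y := Set.disjoint_left.mp hdisj
  set C : Set (α × α) := crossArcs E A X Y with hCdef
  -- reconstruction of B from its restrictions
  have hrecon : ∀ B : Set (α × α), IsOrientation E A B → IsIdeal B Y →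
      B = restrictArcs B X ∪ restrictArcs B Y ∪ C := by
    intro B hB hI
    ext ⟨u, v⟩
    constructor
    · intro hb
      rcases hXorY u with hu | hu
      · rcases hXorY v with hv | hv
        · exact Or.inl (Or.inl ⟨hb, hu, hv⟩)
        · exact Or.inr ⟨hu, hv, hB.2.2 u v hb⟩
      · exact Or.inl (Or.inr ⟨hb, hu, hI u v hu hb⟩)
    · rintro ((⟨hb, -⟩ | ⟨hb, -⟩) | ⟨hu, hv, hav⟩)
      · exact hb
      · exact hb
      · rcases hav with ha | he
        · exact hB.1 ha
        · rcases hB.2.1 u v he with ⟨hb, -⟩ | ⟨hb, -⟩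
          · exact hb
          · exact absurd (hI v u hv hb) (hnb u hu)
  refine ⟨fun B => ⟨(restrictArcs B.val X, restrictArcs B.val Y),
      ⟨isOrientation_restrict X B.2.1, B.2.2.1.mono (fun p hp => hp.1)⟩,
      ⟨isOrientation_restrict Y B.2.1, B.2.2.1.mono (fun p hp => hp.1)⟩⟩,
    ⟨?_, ?_⟩, fun B => rfl⟩
  · -- injective
    intro B B' hEq
    have h1 : restrictArcs B.val X = restrictArcs B'.val X := by
      have := congrArg (fun p => p.val.1) hEq; simpa using this
    have h2 : restrictArcs B.val Y = restrictArcs B'.val Y := by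
      have := congrArg (fun p => p.val.2) hEq; simpa using this
    apply Subtype.ext
    rw [hrecon B.val B.2.1 B.2.2.2, hrecon B'.val B'.2.1 B'.2.2.2, h1, h2]
  · -- surjective
    rintro ⟨⟨B1, B2⟩, ⟨hp1, hac1⟩, hp2, hac2⟩
    have hm1 := arcs_subset hp1
    have hm2 := arcs_subset hp2
    set B : Set (α × α) := B1 ∪ B2 ∪ C with hBdef
    have hnoYX : ∀ u v : α, (u, v) ∈ B → u ∈ Y → v ∈ Y := by
      rintro u v ((hb | hb) | hb) hu
      · exact absurd hu (hnb u (hm1 u v hb).1)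
      · exact (hm2 u v hb).2
      · exact absurd hu (hnb u hb.1)
    have hOr : IsOrientation E A B := by
      refine ⟨?_, ?_, ?_⟩
      · rintro ⟨u, v⟩ ha
        rcases hXorY u with hu | hu
        · rcases hXorY v with hv | hv
          · exact Or.inl (Or.inl (hp1.1 ⟨ha, hu, hv⟩))
          · exact Or.inr ⟨hu, hv, Or.inl ha⟩
        · exact Or.inl (Or.inr (hp2.1 ⟨ha, hu, hY u v hu ha⟩))
      · intro x y he
        rcases hXorY x with hx | hx <;> rcases hXorY y with hy | hy
        · -- both in X
          have heX : s(x, y) ∈ restrictEdges E X :=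
            ⟨he, fun z hz => by rcases Sym2.mem_iff.mp hz with rfl | rfl; exacts [hx, hy]⟩
          rcases hp1.2.1 x y heX with ⟨hb, hnb'⟩ | ⟨hb, hnb'⟩
          · refine Or.inl ⟨Or.inl (Or.inl hb), ?_⟩
            rintro ((h | h) | h)
            · exact hnb' h
            · exact hnb y hy (hm2 y x h).1
            · exact hnb x hx h.2.1
          · refine Or.inr ⟨Or.inl (Or.inl hb), ?_⟩
            rintro ((h | h) | h)
            · exact hnb' h
            · exact hnb x hx (hm2 x y h).1
            · exact hnb y hy h.2.1
        · -- x ∈ X, y ∈ Y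
          refine Or.inl ⟨Or.inr ⟨hx, hy, Or.inr he⟩, ?_⟩
          rintro ((h | h) | h)
          · exact hnb y (hm1 y x h).1 hy
          · exact hnb x hx (hm2 y x h).2
          · exact hnb y h.1 hy
        · -- x ∈ Y, y ∈ X
          refine Or.inr ⟨Or.inr ⟨hy, hx, Or.inr (Sym2.eq_swap ▸ he)⟩, ?_⟩
          rintro ((h | h) | h)
          · exact hnb x (hm1 x y h).1 hx
          · exact hnb y hy (hm2 x y h).2
          · exact hnb x h.1 hx
        · -- both in Y
          have heY : s(x, y) ∈ restrictEdges E Y :=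
            ⟨he, fun z hz => by rcases Sym2.mem_iff.mp hz with rfl | rfl; exacts [hx, hy]⟩
          rcases hp2.2.1 x y heY with ⟨hb, hnb'⟩ | ⟨hb, hnb'⟩
          · refine Or.inl ⟨Or.inl (Or.inr hb), ?_⟩
            rintro ((h | h) | h)
            · exact hnb y (hm1 y x h).1 hy
            · exact hnb' h
            · exact hnb y h.1 hy
          · refine Or.inr ⟨Or.inl (Or.inr hb), ?_⟩
            rintro ((h | h) | h)
            · exact hnb x (hm1 x y h).1 hx
            · exact hnb' h
            · exact hnb x h.1 hx
      · rintro u v ((hb | hb) | hb)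
        · rcases hp1.2.2 u v hb with h | h
          · exact Or.inl h.1
          · exact Or.inr h.1
        · rcases hp2.2.2 u v hb with h | h
          · exact Or.inl h.1
          · exact Or.inr h.1
        · exact hb.2.2
    have hAc : Acyclic B := by
      rintro c n ⟨hn, hcyc, harcs⟩
      rcases hXorY (c 0) with h0 | h0
      · -- all vertices in X
        have hstep : ∀ i, i < n → c (i + 1) ∈ X → c i ∈ X := by
          intro i hi hx1
          rcases hXorY (c i) with h | h
          · exact h
          · exact absurd (hnoYX _ _ (harcs i hi) h) (hnb _ hx1)
        have hback : ∀ k, k ≤ n → c (n - k) ∈ X := by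
          intro k
          induction k with
          | zero => intro _; simpa using hcyc ▸ h0
          | succ k ih =>
            intro hk
            have hX : c (n - k) ∈ X := ih (by omega)
            have hlt : n - (k + 1) < n := by omega
            have heq : n - (k + 1) + 1 = n - k := by omega
            exact hstep _ hlt (by rw [heq]; exact hX)
        have hallX : ∀ i, i ≤ n → c i ∈ X := by
          intro i hi
          have := hback (n - i) (by omega)
          rwa [Nat.sub_sub_self hi] at this
        have harcs1 : ∀ i < n, (c i, c (i + 1)) ∈ B1 := by
          intro i hi
          rcases harcs i hi with (h | h) | h
          · exact h
          · exact absurd (hallX i (by omega)) (fun hx => hnb _ hx (hm2 _ _ h).1)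
          · exact absurd (hallX (i + 1) (by omega)) (fun hx => hnb _ hx h.2.1)
        exact hac1 c n ⟨hn, hcyc, harcs1⟩
      · -- all vertices in Y
        have hallY : ∀ i, i ≤ n → c i ∈ Y := by
          intro i
          induction i with
          | zero => intro _; exact h0
          | succ i ih =>
            intro hi
            exact hnoYX _ _ (harcs i (by omega)) (ih (by omega))
        have harcs2 : ∀ i < n, (c i, c (i + 1)) ∈ B2 := by
          intro i hi
          rcases harcs i hi with (h | h) | h
          · exact absurd (hallY i (by omega)) (hnb _ (hm1 _ _ h).1)
          · exact h
          · exact absurd (hallY i (by omega)) (hnb _ h.1)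
        exact hac2 c n ⟨hn, hcyc, harcs2⟩
    have hId : IsIdeal B Y := fun u v hu hb => hnoYX u v hb hu
    have hRX : restrictArcs B X = B1 := by
      ext ⟨u, v⟩
      constructor
      · rintro ⟨(hb | hb) | hb, hu, hv⟩
        · exact hb
        · exact absurd (hm2 u v hb).1 (hnb u hu)
        · exact absurd hb.2.1 (hnb v hv)
      · intro hb
        exact ⟨Or.inl (Or.inl hb), hm1 u v hb⟩
    have hRY : restrictArcs B Y = B2 := by
      ext ⟨u, v⟩
      constructor
      · rintro ⟨(hb | hb) | hb, hu, hv⟩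
        · exact absurd hu (hnb u (hm1 u v hb).1)
        · exact hb
        · exact absurd hu (hnb u hb.1)
      · intro hb
        exact ⟨Or.inl (Or.inr hb), hm2 u v hb⟩
    exact ⟨⟨B, hOr, hAc, hId⟩, Subtype.ext (show (restrictArcs B X, restrictArcs B Y) = (B1, B2) by rw [hRX, hRY])⟩
end

section
/- For any mixed graph G and positive integer N, the number of strong valid N-colorations of G equals the sum over acyclic orientations H of G of the number of strong valid N-colorations of H. Equivalently: maps c : V(G) → [N] with c(x) < c(y) for each arc (x,y) of G and c(x) ≠ c(y) for each edge {x,y} of G are in bijection with pairs (H, c) where H is an acyclic orientation of G and c : V(G) → [N] satisfies c(x) < c(y) for each arc (x,y) of H. -/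
lemma acyclic_of_mono {α : Type} {N : ℕ} (B : Set (α × α)) (c : α → Fin N)
    (h : ∀ x y : α, (x, y) ∈ B → c x < c y) : Acyclic B := by
  rintro cyc n ⟨hn, h0, hcyc⟩
  have key : ∀ i, i + 1 ≤ n → c (cyc 0) < c (cyc (i + 1)) := by
    intro i
    induction i with
    | zero => intro hi; exact h _ _ (hcyc 0 (by omega))
    | succ j ih =>
      intro hi
      exact lt_trans (ih (by omega)) (h _ _ (hcyc (j + 1) (by omega)))
  have := key (n - 1) (by omega)
  rw [show n - 1 + 1 = n by omega, ← h0] at this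
  exact lt_irrefl _ this

/-- Strong valid `N`-colorations of a mixed graph `G` are in bijection with pairs
`(H, c)` where `H` is an acyclic orientation of `G` and `c` is a map with `c x < c y`
along every arc of `H`. In particular the number of strong valid `N`-colorations of `G`
is the sum, over acyclic orientations `H` of `G`, of the number of strong valid
`N`-colorations of `H`. -/
theorem strong_colorations_equiv_orientations {α : Type} (E : Set (Sym2 α))
    (A : Set (α × α)) (N : ℕ)
    (hedge : ∀ e ∈ E, ¬ e.IsDiag) (harc : ∀ a ∈ A, a.1 ≠ a.2)
    (hcompat : ∀ x y : α, s(x, y) ∈ E → (x, y) ∉ A) :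
    Nonempty
      ({c : α → Fin N //
          (∀ x y : α, (x, y) ∈ A → c x < c y) ∧
          (∀ x y : α, s(x, y) ∈ E → c x ≠ c y)} ≃
       {p : Set (α × α) × (α → Fin N) //
          IsOrientation E A p.1 ∧ Acyclic p.1 ∧
          ∀ x y : α, (x, y) ∈ p.1 → p.2 x < p.2 y}) := by
  constructor
  refine
    { toFun := fun ⟨c, h1, h2⟩ =>
        ⟨(A ∪ {p | s(p.1, p.2) ∈ E ∧ c p.1 < c p.2}, c), ?_, ?_, ?_⟩
      invFun := fun ⟨⟨B, c⟩, hor, hac, hmono⟩ =>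
        ⟨c, fun x y hxy => hmono x y (hor.1 hxy), fun x y hxy => by
          rcases hor.2.1 x y hxy with ⟨h, _⟩ | ⟨h, _⟩
          · exact ne_of_lt (hmono x y h)
          · exact (ne_of_lt (hmono y x h)).symm⟩
      left_inv := ?_
      right_inv := ?_ }
  · refine ⟨Set.subset_union_left, fun x y hxy => ?_, fun x y hxy => ?_⟩
    · rcases lt_or_gt_of_ne (h2 x y hxy) with h | h
      · left
        refine ⟨Or.inr ⟨hxy, h⟩, ?_⟩
        rintro (hA | ⟨_, h'⟩)
        · exact hcompat y x (by rwa [Sym2.eq_swap]) hA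
        · exact absurd h (not_lt_of_gt h')
      · right
        refine ⟨Or.inr ⟨by rwa [Sym2.eq_swap], h⟩, ?_⟩
        rintro (hA | ⟨_, h'⟩)
        · exact hcompat x y hxy hA
        · exact absurd h (not_lt_of_gt h')
    · rcases hxy with hA | ⟨hE, _⟩
      · exact Or.inl hA
      · exact Or.inr hE
  · exact acyclic_of_mono _ c (fun x y hxy => by
      rcases hxy with hA | ⟨_, h⟩
      · exact h1 x y hA
      · exact h)
  · rintro x y (hA | ⟨_, h⟩)
    · exact h1 x y hA
    · exact h
  · rintro ⟨c, h1, h2⟩; rfl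
  · rintro ⟨⟨B, c⟩, hor, hac, hmono⟩
    simp only [Subtype.mk.injEq, Prod.mk.injEq]
    constructor
    · ext ⟨x, y⟩
      simp only [Set.mem_union, Set.mem_setOf_eq]
      constructor
      · rintro (hA | ⟨hE, hlt⟩)
        · exact hor.1 hA
        · rcases hor.2.1 x y hE with ⟨h, _⟩ | ⟨h, _⟩
          · exact h
          · exact absurd hlt (not_lt_of_gt (hmono y x h))
      · intro hxy
        rcases hor.2.2 x y hxy with hA | hE
        · exact Or.inl hA
        · exact Or.inr ⟨hE, hmono x y hxy⟩
    · trivial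
end

section
/- In the ring of polynomials ℚ[X], the family (ν_k)_{k≥2} of rationals satisfying ν_2 = −1 and, for every n ≥ 3, the recursion ∑_{k=2}^{n} (number of compositions of n into k parts) · ν_k = 0, is given by ν_k = (−1)^{k+1}(k−1). Equivalently, the formal power series identity ∑_{k≥2} (−1)^{k+1}(k−1) (X/(1−X))^k = −X² holds in ℚ[[X]]. -/
/-!
Stars and bars gives `compCount n k = C(n-1, k-1)`, which is also the coefficient of `X^n` in
`(X/(1-X))^k`. Both claims therefore reduce to `∑_{k=2}^n C(n-1, k-1) (-1)^(k+1) (k-1) = 0` for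
`n ≥ 3`, which follows from `(k-1) C(n-1, k-1) = (n-1) C(n-2, k-2)` and the vanishing of the
alternating sum of the binomial coefficients `C(n-2, ·)`. Uniqueness holds because the recursion
is a unitriangular linear system.
-/

/-- The number of compositions of `n` into `k` (positive) parts. -/
noncomputable def compCount (n k : ℕ) : ℕ :=
  Nat.card {c : Fin k → ℕ // (∀ i, 1 ≤ c i) ∧ ∑ i, c i = n}

open Finset PowerSeries

/- Subtracting `1` from every part turns compositions of `m + k` into `k` parts into weak
compositions of `m`, which stars and bars counts. -/
theorem compCount_add_self (m k : ℕ) : compCount (m + k) k = (k + m - 1).choose m := by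
  let shift : {P : Fin k → ℕ // ∑ i, P i = m} ≃
      {c : Fin k → ℕ // (∀ i, 1 ≤ c i) ∧ ∑ i, c i = m + k} :=
    { toFun := fun P => ⟨P.1 + 1, fun i => by simp, by simp [sum_add_distrib, P.2]⟩
      invFun := fun c => ⟨c.1 - 1, by
        obtain ⟨c, hpos, hsum⟩ := c
        show ∑ i, (c i - 1) = m
        have h : ∑ i, (c i - 1 + 1) = m + k :=
          hsum ▸ sum_congr rfl fun i _ => Nat.sub_add_cancel (hpos i)
        simp only [sum_add_distrib, sum_const, card_univ, Fintype.card_fin, smul_eq_mul,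
          mul_one] at h
        omega⟩
      left_inv := fun P => by ext; simp
      right_inv := fun c => by ext i; exact Nat.sub_add_cancel (c.2.1 i) }
  rw [compCount, ← Nat.card_congr shift,
    ← Nat.card_congr (Sym.equivNatSumOfFintype (Fin k) m), Nat.card_eq_fintype_card,
    Sym.card_sym_eq_choose, Fintype.card_fin]

theorem compCount_eq_choose {n k : ℕ} (hk : 0 < k) (hkn : k ≤ n) :
    compCount n k = (n - 1).choose (k - 1) := by
  obtain ⟨m, rfl⟩ := Nat.exists_eq_add_of_le' hkn
  rw [compCount_add_self, show m + k - 1 = k + m - 1 by omega]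
  exact Nat.choose_symm_of_eq_add (by omega)

theorem compCount_self (n : ℕ) : compCount n n = 1 := by
  simpa using compCount_add_self 0 n

theorem eq_of_sum_compCount_mul_eq_zero {R : Type*} [Ring R] {ν μ : ℕ → R} (h2 : ν 2 = μ 2)
    (hν : ∀ n, 3 ≤ n → ∑ k ∈ Icc 2 n, (compCount n k : R) * ν k = 0)
    (hμ : ∀ n, 3 ≤ n → ∑ k ∈ Icc 2 n, (compCount n k : R) * μ k = 0) :
    ∀ k, 2 ≤ k → ν k = μ k := by
  intro k
  induction k using Nat.strong_induction_on with
  | _ k ih =>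
    intro hk
    obtain rfl | hk3 := hk.eq_or_lt
    · exact h2
    obtain ⟨n, rfl⟩ : ∃ n, k = n + 1 := ⟨k - 1, by omega⟩
    have hlower : ∑ j ∈ Icc 2 n, (compCount (n + 1) j : R) * ν j =
        ∑ j ∈ Icc 2 n, (compCount (n + 1) j : R) * μ j :=
      sum_congr rfl fun j hj => by rw [ih j (by grind) (mem_Icc.1 hj).1]
    have eν := hν (n + 1) hk3
    have eμ := hμ (n + 1) hk3
    rw [sum_Icc_succ_top (by omega), compCount_self, Nat.cast_one, one_mul] at eν eμ
    rw [hlower] at eν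
    exact add_left_cancel (eν.trans eμ.symm)

theorem sum_range_neg_one_pow_mul_choose {R : Type*} [Ring R] {N : ℕ} (hN : N ≠ 0) :
    ∑ i ∈ range (N + 1), (-1 : R) ^ i * N.choose i = 0 := by
  exact_mod_cast congrArg (Int.cast : ℤ → R) (Int.alternating_sum_range_choose_of_ne hN)

-- `nuW k` is the paper's `ν_W(G_k)`.
def nuW (k : ℕ) : ℚ := (-1) ^ (k + 1) * ((k : ℚ) - 1)

theorem sum_choose_mul_nuW_eq_zero {n : ℕ} (hn : 3 ≤ n) :
    ∑ k ∈ Icc 2 n, ((n - 1).choose (k - 1) : ℚ) * nuW k = 0 := by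
  obtain ⟨N, rfl⟩ : ∃ N, n = N + 2 := ⟨n - 2, by omega⟩
  have hterm (i : ℕ) : ((N + 1).choose (i + 1) : ℚ) * nuW (2 + i) =
      -(N + 1) * ((-1) ^ i * N.choose i) := by
    have hchoose : ((N + 1).choose (i + 1) : ℚ) * (i + 1) = (N + 1) * N.choose i := by
      exact_mod_cast (Nat.add_one_mul_choose_eq N i).symm
    rw [nuW, show 2 + i + 1 = i + 3 by ring, pow_add]
    push_cast
    linear_combination -(-1 : ℚ) ^ i * hchoose
  rw [← Ico_add_one_right_eq_Icc, sum_Ico_eq_sum_range, show N + 2 + 1 - 2 = N + 1 by omega,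
    show N + 2 - 1 = N + 1 by omega]
  simp only [show ∀ i, 2 + i - 1 = i + 1 by omega, hterm, ← mul_sum,
    sum_range_neg_one_pow_mul_choose (show N ≠ 0 by omega), mul_zero]

theorem sum_compCount_mul_nuW {n : ℕ} (hn : 3 ≤ n) :
    ∑ k ∈ Icc 2 n, (compCount n k : ℚ) * nuW k = 0 := by
  rw [← sum_choose_mul_nuW_eq_zero hn]
  refine sum_congr rfl fun k hk => ?_
  rw [compCount_eq_choose (by grind) (mem_Icc.1 hk).2]

theorem sum_choose_mul_nuW_eq_coeff (n : ℕ) :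
    ∑ k ∈ Icc 2 n, ((n - 1).choose (k - 1) : ℚ) * nuW k = coeff n (-X ^ 2 : ℚ⟦X⟧) := by
  obtain hn | hn := lt_or_ge n 3
  · interval_cases n <;> norm_num [nuW, coeff_X_pow]
  · rw [sum_choose_mul_nuW_eq_zero hn, map_neg, coeff_X_pow, if_neg (by omega), neg_zero]

theorem coeff_C_mul_X_mul_inv_one_sub_X_pow {K : Type*} [Field K] (a : K) {n k : ℕ}
    (hk : 0 < k) (hkn : k ≤ n) :
    coeff n (C a * (X * (1 - X)⁻¹) ^ k : K⟦X⟧) = (n - 1).choose (k - 1) * a := by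
  obtain ⟨d, rfl⟩ : ∃ d, k = d + 1 := ⟨k - 1, by omega⟩
  have hinv : (1 - X : K⟦X⟧)⁻¹ = PowerSeries.mk 1 :=
    (inv_eq_iff_mul_eq_one (by simp)).2 (mk_one_mul_one_sub_eq_one K)
  rw [hinv, mul_pow, coeff_C_mul, mk_one_pow_eq_mk_choose_add, coeff_X_pow_mul', if_pos hkn,
    coeff_mk, show d + (n - (d + 1)) = n - 1 by omega]
  simp [mul_comm]

/-- The family `(ν_k)_{k ≥ 2}` of rationals with `ν_2 = −1` and, for all `n ≥ 3`,
`∑_{k=2}^{n} (#compositions of n into k parts) ν_k = 0`, is `ν_k = (−1)^{k+1}(k−1)`;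
equivalently, `∑_{k ≥ 2} (−1)^{k+1}(k−1) (X/(1−X))^k = −X²` in `ℚ[[X]]` (stated
coefficientwise, only the terms with `k ≤ n` contributing to the `n`-th coefficient). -/
theorem nu_W_values :
    (∀ ν : ℕ → ℚ, ν 2 = -1 →
      (∀ n : ℕ, 3 ≤ n → ∑ k ∈ Finset.Icc 2 n, (compCount n k : ℚ) * ν k = 0) →
      ∀ k : ℕ, 2 ≤ k → ν k = (-1) ^ (k + 1) * ((k : ℚ) - 1)) ∧
    (∀ n : ℕ,
      ∑ k ∈ Finset.Icc 2 n,
          (PowerSeries.coeff (R := ℚ) n)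
            (PowerSeries.C (R := ℚ) ((-1) ^ (k + 1) * ((k : ℚ) - 1)) *
              (PowerSeries.X * (1 - PowerSeries.X)⁻¹) ^ k) =
        (PowerSeries.coeff (R := ℚ) n) (-(PowerSeries.X ^ 2))) := by
  refine ⟨fun ν h2 hrec => ?_, fun n => ?_⟩
  · exact eq_of_sum_compCount_mul_eq_zero (μ := nuW) (by norm_num [h2, nuW]) hrec
      fun n hn => sum_compCount_mul_nuW hn
  · refine (sum_congr rfl fun k hk => ?_).trans (sum_choose_mul_nuW_eq_coeff n)
    exact coeff_C_mul_X_mul_inv_one_sub_X_pow _ (by grind) (mem_Icc.1 hk).2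
end

section
/- Let G be a mixed graph on X ⊔ Y, and let ∼_X, ∼_Y be equivalence relations on X and Y respectively, with ∼ = ∼_X ⊔ ∼_Y their disjoint union on X ⊔ Y. Then the following are equivalent: (i) every class of ∼ is a connected subgraph of G and Y/∼_Y is an ideal of G/∼; (ii) Y is an ideal of G, every class of ∼_X is connected in G|_X, and every class of ∼_Y is connected in G|_Y. -/
/-- For a mixed graph `G` (edges `E`, arcs `A`) on `X ⊔ Y` and an equivalence relation
`rel` which is the disjoint union of equivalences on `X` and on `Y` (i.e. its classes
refine `{X, Y}`), the following are equivalent: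
(i) every class of `rel` is a connected subgraph of `G` and `Y/∼` is an ideal of the
quotient graph `G/∼` (i.e. any arc of `G` between non-equivalent vertices starting in
`Y` ends in `Y`);
(ii) `Y` is an ideal of `G`, every class contained in `X` is connected in `G|_X`, and
every class contained in `Y` is connected in `G|_Y`. -/
theorem delta_Delta_compatibility {α : Type} (E : Set (Sym2 α)) (A : Set (α × α))
    (X Y : Set α) (hdisj : Disjoint X Y) (hcover : X ∪ Y = Set.univ)
    (rel : α → α → Prop) (hrel : Equivalence rel)
    (hrefine : ∀ x y : α, rel x y → (x ∈ X ↔ y ∈ X)) :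
    ((∀ x y : α, rel x y →
        Relation.ReflTransGen
          (fun a b => ((a, b) ∈ A ∨ (b, a) ∈ A ∨ s(a, b) ∈ E) ∧ rel a b) x y) ∧
      (∀ x y : α, (x, y) ∈ A → ¬ rel x y → x ∈ Y → y ∈ Y)) ↔
    ((∀ x y : α, x ∈ Y → (x, y) ∈ A → y ∈ Y) ∧
      (∀ x y : α, x ∈ X → y ∈ X → rel x y →
        Relation.ReflTransGen
          (fun a b => a ∈ X ∧ b ∈ X ∧ ((a, b) ∈ A ∨ (b, a) ∈ A ∨ s(a, b) ∈ E) ∧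
            rel a b) x y) ∧
      (∀ x y : α, x ∈ Y → y ∈ Y → rel x y →
        Relation.ReflTransGen
          (fun a b => a ∈ Y ∧ b ∈ Y ∧ ((a, b) ∈ A ∨ (b, a) ∈ A ∨ s(a, b) ∈ E) ∧
            rel a b) x y)) := by
  have hmem : ∀ a : α, a ∈ X ∨ a ∈ Y := by
    intro a
    have : a ∈ X ∪ Y := by rw [hcover]; exact Set.mem_univ a
    exact this
  have hXY : ∀ a : α, a ∈ X → a ∉ Y := fun a ha hb =>
    Set.disjoint_left.mp hdisj ha hb
  have hrefineY : ∀ x y : α, rel x y → (x ∈ Y ↔ y ∈ Y) := by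
    intro x y h
    constructor
    · intro hx
      rcases hmem y with hy | hy
      · exact absurd ((hrefine x y h).mpr hy) (fun hxX => hXY x hxX hx)
      · exact hy
    · intro hy
      rcases hmem x with hx | hx
      · exact absurd ((hrefine x y h).mp hx) (fun hyX => hXY y hyX hy)
      · exact hx
  have key : ∀ (S : Set α), (∀ a b, rel a b → (a ∈ S ↔ b ∈ S)) →
      ∀ x y, Relation.ReflTransGen
        (fun a b => ((a, b) ∈ A ∨ (b, a) ∈ A ∨ s(a, b) ∈ E) ∧ rel a b) x y →
      x ∈ S → y ∈ S ∧ Relation.ReflTransGen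
        (fun a b => a ∈ S ∧ b ∈ S ∧ ((a, b) ∈ A ∨ (b, a) ∈ A ∨ s(a, b) ∈ E) ∧
          rel a b) x y := by
    intro S hS x y h hx
    induction h with
    | refl => exact ⟨hx, Relation.ReflTransGen.refl⟩
    | tail hab hbc ih =>
      exact ⟨(hS _ _ hbc.2).mp ih.1,
        ih.2.tail ⟨ih.1, (hS _ _ hbc.2).mp ih.1, hbc⟩⟩
  constructor
  · rintro ⟨hconn, hid⟩
    refine ⟨?_, ?_, ?_⟩
    · intro x y hx hxy
      by_cases h : rel x y
      · exact (hrefineY x y h).mp hx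
      · exact hid x y hxy h hx
    · intro x y hx _ hxy
      exact (key X hrefine x y (hconn x y hxy) hx).2
    · intro x y hx _ hxy
      exact (key Y hrefineY x y (hconn x y hxy) hx).2
  · rintro ⟨hid, hX, hY⟩
    constructor
    · intro x y hxy
      rcases hmem x with hx | hx
      · exact Relation.ReflTransGen.mono
          (fun a b hab => hab.2.2) _ _ (hX x y hx ((hrefine x y hxy).mp hx) hxy)
      · exact Relation.ReflTransGen.mono
          (fun a b hab => hab.2.2) _ _ (hY x y hx ((hrefineY x y hxy).mp hx) hxy)
    · intro x y hxy _ hx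
      exact hid x y hx hxy
end
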